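/- Let (S, A) be an average scheme on a norming dual pair (X,Y). If for every x ∈ X the net (A_α x) clusters in (X, σ(X,Y)) and for every y ∈ Y the net (A'_α y) clusters in (Y, σ(Y,X)), then the fixed spaces fix(S) and fix(S') separate each other. -/

import Mathlib

open Filter Topology Set

noncomputable section

/-- A norming dual pair `(X, Y, ⟨·,·⟩)`: Banach spaces `X`, `Y` with a bilinear duality
such that each norm is recovered as a supremum of pairings against the unit ball. -/
structure NormingDualPair (X Y : Type*) [NormedAddCommGroup X] [NormedSpace ℝ X]
    [NormedAddCommGroup Y] [NormedSpace ℝ Y] : Type _ where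
  p : X →ₗ[ℝ] Y →ₗ[ℝ] ℝ
  norm_eq_left : ∀ x : X, ‖x‖ = ⨆ y : {y : Y // ‖y‖ ≤ 1}, |p x y.1|
  norm_eq_right : ∀ y : Y, ‖y‖ = ⨆ x : {x : X // ‖x‖ ≤ 1}, |p x.1 y|

variable {X Y : Type*} [NormedAddCommGroup X] [NormedSpace ℝ X]
  [NormedAddCommGroup Y] [NormedSpace ℝ Y]

/-- The weak topology `σ(X,Y)` on `X` induced by the pairing. -/
def NormingDualPair.sigma (ndp : NormingDualPair X Y) : TopologicalSpace X :=
  TopologicalSpace.induced (fun x => fun y : Y => ndp.p x y) Pi.topologicalSpace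

/-- The weak topology `σ(Y,X)` on `Y` induced by the pairing. -/
def NormingDualPair.sigma' (ndp : NormingDualPair X Y) : TopologicalSpace Y :=
  TopologicalSpace.induced (fun y => fun x : X => ndp.p x y) Pi.topologicalSpace

/-- The fixed space `fix(𝒮) = ⋂_{S ∈ 𝒮} ker (I - S)`. -/
def fixedSpace (S : Set (X →L[ℝ] X)) : Set X := {x | ∀ s ∈ S, s x = x}

/-- The range `rg(I - 𝒮) = {x - Sx : x ∈ X, S ∈ 𝒮}`. -/
def rangeIminus (S : Set (X →L[ℝ] X)) : Set X := {z | ∃ x : X, ∃ s ∈ S, z = x - s x}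

/-- An average scheme `(𝒮, (A_α)_{α ∈ ι})` on a norming dual pair `(X,Y)`:
a semigroup `𝒮 ⊆ L(X,σ)` (σ-continuity encoded via the existence of adjoints on `Y`)
and a net of σ-continuous operators satisfying (AS1)-(AS3). -/
structure AverageScheme (ndp : NormingDualPair X Y) (ι : Type*) [Preorder ι] : Type _ where
  S : Set (X →L[ℝ] X)
  adj : (X →L[ℝ] X) → (Y →L[ℝ] Y)
  one_mem : (1 : X →L[ℝ] X) ∈ S
  comp_mem : ∀ s ∈ S, ∀ t ∈ S, s.comp t ∈ S
  adj_spec : ∀ s ∈ S, ∀ (x : X) (y : Y), ndp.p (s x) y = ndp.p x (adj s y)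
  A : ι → (X →L[ℝ] X)
  A' : ι → (Y →L[ℝ] Y)
  A'_spec : ∀ (α : ι) (x : X) (y : Y), ndp.p (A α x) y = ndp.p x (A' α y)
  normBound : ∃ M : ℝ, ∀ α : ι, ‖A α‖ ≤ M
  as2 : ∀ (α : ι) (x : X),
    A α x ∈ @closure X ndp.sigma (convexHull ℝ {z | ∃ s ∈ S, z = s x})
  as2' : ∀ (α : ι) (y : Y),
    A' α y ∈ @closure Y ndp.sigma' (convexHull ℝ {z | ∃ s ∈ S, z = adj s y})
  as3_left : ∀ s ∈ S, ∀ x : X, Tendsto (fun α : ι => A α (s x - x)) atTop (nhds 0)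
  as3_right : ∀ s ∈ S, ∀ x : X, Tendsto (fun α : ι => s (A α x) - A α x) atTop (nhds 0)
  as3'_left : ∀ s ∈ S, ∀ y : Y, Tendsto (fun α : ι => A' α (adj s y - y)) atTop (nhds 0)
  as3'_right : ∀ s ∈ S, ∀ y : Y, Tendsto (fun α : ι => adj s (A' α y) - A' α y) atTop (nhds 0)

/-- The fixed space of the adjoint semigroup `fix(𝒮')` in `Y`. -/
def AverageScheme.fix' {ι : Type*} [Preorder ι] {ndp : NormingDualPair X Y}
    (AS : AverageScheme ndp ι) : Set Y := {y | ∀ s ∈ AS.S, AS.adj s y = y}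

/-- The range `rg(I - 𝒮')` in `Y`. -/
def AverageScheme.rg' {ι : Type*} [Preorder ι] {ndp : NormingDualPair X Y}
    (AS : AverageScheme ndp ι) : Set Y := {z | ∃ y : Y, ∃ s ∈ AS.S, z = y - AS.adj s y}

/-- A filter (net) clusters in a topology: every finer nontrivial filter (subnet) has a
cluster point (i.e. a convergent subnet). -/
def ClustersIn {Z : Type*} (τ : TopologicalSpace Z) (F : Filter Z) : Prop :=
  ∀ G : Filter Z, G ≤ F → G.NeBot → ∃ z : Z, @ClusterPt Z τ z G

/-- Weak ergodicity: `σ`-convergence of `A_α x` for every `x` and `σ'`-convergence of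
`A'_α y` for every `y`. -/
def AverageScheme.WeaklyErgodic {ι : Type*} [Preorder ι] {ndp : NormingDualPair X Y}
    (AS : AverageScheme ndp ι) : Prop :=
  (∀ x : X, ∃ l : X, Tendsto (fun α : ι => AS.A α x) atTop (@nhds X ndp.sigma l)) ∧
  (∀ y : Y, ∃ l : Y, Tendsto (fun α : ι => AS.A' α y) atTop (@nhds Y ndp.sigma' l))

/-- The fixed space as a submodule. -/
def fixedSubmodule (S : Set (X →L[ℝ] X)) : Submodule ℝ X where
  carrier := {x | ∀ s ∈ S, s x = x}
  add_mem' := by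
    intro a b ha hb s hs
    simp only [Set.mem_setOf_eq] at *
    rw [map_add, ha s hs, hb s hs]
  zero_mem' := by
    intro s hs
    simp
  smul_mem' := by
    intro c x hx s hs
    simp only [Set.mem_setOf_eq] at *
    rw [map_smul, hx s hs]

/-! If `x ∈ fix(𝒮)`, then `A_α x = x`: (AS2) puts `A_α x` in the `σ`-closure of `{x}`, and `σ` is
Hausdorff because `Y` separates `X`. Given `x ≠ 0`, pick `y₀` with `⟨x, y₀⟩ ≠ 0`; then
`⟨x, A'_α y₀⟩ = ⟨A_α x, y₀⟩ = ⟨x, y₀⟩` is constant, so every `σ'`-cluster point `z` of `(A'_α y₀)`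
still has `⟨x, z⟩ ≠ 0`. For `S ∈ 𝒮` and `u ∈ X`, `⟨u, S'z - z⟩` is a limit of
`⟨u, S'A'_α y₀ - A'_α y₀⟩ → 0` by (AS3), so `z ∈ fix(𝒮')`. The converse is the same argument for
the flipped pair `(Y, X)`. -/

theorem MapClusterPt.eq_of_tendsto_comp {Z T ι : Type*} [TopologicalSpace Z] [TopologicalSpace T]
    [T2Space T] {l : Filter ι} {w : ι → Z} {z : Z} {g : Z → T} {c : T}
    (hz : MapClusterPt z l w) (hg : ContinuousAt g z) (hc : Tendsto (g ∘ w) l (𝓝 c)) :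
    g z = c :=
  eq_of_nhds_neBot <| (hz.continuousAt_comp hg).clusterPt.neBot.mono (inf_le_inf_left _ hc)

namespace NormingDualPair

variable (ndp : NormingDualPair X Y)

def flip : NormingDualPair Y X where
  p := ndp.p.flip
  norm_eq_left := ndp.norm_eq_right
  norm_eq_right := ndp.norm_eq_left

theorem abs_p_le (x : X) (y : Y) : |ndp.p x y| ≤ ‖x‖ * ‖y‖ := by
  rcases eq_or_ne x 0 with rfl | hx
  · simp
  have hx_pos : 0 < ‖x‖ := norm_pos_iff.mpr hx
  by_cases hbdd : BddAbove (range fun x' : {x' : X // ‖x'‖ ≤ 1} => |ndp.p x'.1 y|)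
  · have hu : ‖‖x‖⁻¹ • x‖ ≤ 1 := by
      rw [norm_smul, norm_inv, norm_norm, inv_mul_cancel₀ hx_pos.ne']
    have hle : |ndp.p (‖x‖⁻¹ • x) y| ≤ ‖y‖ := by
      rw [ndp.norm_eq_right y]
      exact le_ciSup hbdd ⟨_, hu⟩
    rw [map_smul, LinearMap.smul_apply, smul_eq_mul, abs_mul, abs_inv, abs_norm,
      inv_mul_le_iff₀ hx_pos] at hle
    exact hle
  · have hy : y = 0 := by
      rw [← norm_eq_zero, ndp.norm_eq_right y]
      exact Real.iSup_of_not_bddAbove hbdd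
    simp [hy]

theorem eq_zero_of_forall_p_eq_zero {y : Y} (h : ∀ x, ndp.p x y = 0) : y = 0 := by
  have : Nonempty {x : X // ‖x‖ ≤ 1} := ⟨⟨0, by simp⟩⟩
  rw [← norm_eq_zero, ndp.norm_eq_right y]
  simp only [h, abs_zero, ciSup_const]

theorem weak_continuous_p (x : X) : Continuous[ndp.sigma', _] (ndp.p x) := by
  let := ndp.sigma'
  have hpair : Continuous fun (y : Y) (x : X) => ndp.p x y := continuous_induced_dom
  exact (continuous_apply x).comp hpair

theorem t2Space_sigma' : @T2Space Y ndp.sigma' :=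
  @T2Space.of_injective_continuous _ _ ndp.sigma' _ _ _
    (fun y₁ y₂ h => sub_eq_zero.mp <| ndp.eq_zero_of_forall_p_eq_zero fun x => by
      rw [map_sub, sub_eq_zero]; exact congrFun h x)
    continuous_induced_dom

theorem t2Space_sigma : @T2Space X ndp.sigma := ndp.flip.t2Space_sigma'

theorem continuous_p (x : X) : Continuous (ndp.p x) :=
  ((ndp.p x).mkContinuous ‖x‖ fun y => by
    simpa only [Real.norm_eq_abs] using ndp.abs_p_le x y).continuous

variable {ι : Type*} {l : Filter ι} {w : ι → Y} {z : Y}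

theorem p_eq_of_mapClusterPt (hz : @MapClusterPt Y ndp.sigma' ι z l w) {x : X} {c : ℝ}
    (hc : Tendsto (fun α => ndp.p x (w α)) l (𝓝 c)) : ndp.p x z = c := by
  let := ndp.sigma'
  exact hz.eq_of_tendsto_comp (ndp.weak_continuous_p x).continuousAt hc

theorem eq_self_of_mapClusterPt (hz : @MapClusterPt Y ndp.sigma' ι z l w) {T : Y → Y}
    {T' : X → X} (hT : ∀ x y, ndp.p (T' x) y = ndp.p x (T y))
    (hw : Tendsto (fun α => T (w α) - w α) l (𝓝 0)) : T z = z := by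
  refine sub_eq_zero.mp (ndp.eq_zero_of_forall_p_eq_zero fun x => ?_)
  have hpair : ∀ y, ndp.p (T' x - x) y = ndp.p x (T y - y) := fun y => by
    rw [map_sub, map_sub, LinearMap.sub_apply, hT]
  rw [← hpair]
  refine ndp.p_eq_of_mapClusterPt hz ?_
  simp only [hpair]
  exact ((ndp.continuous_p x).tendsto' 0 0 (map_zero _)).comp hw

/-- Stated for abstract adjoint families so that it applies to `ndp.flip` as well. -/
theorem exists_forall_map_eq_self_p_ne_zero {κ : Type*} [l.NeBot] {T : κ → Y → Y}
    {T' : κ → X → X} (hT : ∀ k x y, ndp.p (T' k x) y = ndp.p x (T k y))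
    {A : ι → X → X} {B : ι → Y → Y} (hAB : ∀ α x y, ndp.p (A α x) y = ndp.p x (B α y))
    (hB : ∀ y, ClustersIn ndp.sigma' (map (fun α => B α y) l))
    (hTB : ∀ k y, Tendsto (fun α => T k (B α y) - B α y) l (𝓝 0))
    {x : X} (hAx : ∀ α, A α x = x) (hx : x ≠ 0) :
    ∃ y, (∀ k, T k y = y) ∧ ndp.p x y ≠ 0 := by
  obtain ⟨y₀, hy₀⟩ : ∃ y₀, ndp.p x y₀ ≠ 0 := by
    by_contra! h
    exact hx (ndp.flip.eq_zero_of_forall_p_eq_zero h)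
  obtain ⟨z, hz⟩ := hB y₀ _ le_rfl inferInstance
  refine ⟨z, fun k => ndp.eq_self_of_mapClusterPt hz (hT k) (hTB k y₀), ?_⟩
  have hconst : ∀ α, ndp.p x (B α y₀) = ndp.p x y₀ := fun α => by rw [← hAB, hAx]
  rwa [ndp.p_eq_of_mapClusterPt hz (by simp only [hconst]; exact tendsto_const_nhds)]

end NormingDualPair

namespace AverageScheme

variable {ndp : NormingDualPair X Y} {ι : Type*} [Preorder ι] (AS : AverageScheme ndp ι)

theorem A_apply_of_mem_fixedSpace {x : X} (hx : x ∈ fixedSpace AS.S) (α : ι) :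
    AS.A α x = x := by
  have horbit : {z | ∃ s ∈ AS.S, z = s x} = {x} := by
    ext z
    constructor
    · rintro ⟨s, hs, rfl⟩
      exact hx s hs
    · rintro rfl
      exact ⟨1, AS.one_mem, rfl⟩
  let := ndp.sigma
  have := ndp.t2Space_sigma
  simpa only [horbit, convexHull_singleton, closure_singleton, mem_singleton_iff] using AS.as2 α x

theorem A'_apply_of_mem_fix' {y : Y} (hy : y ∈ AS.fix') (α : ι) : AS.A' α y = y := by
  have horbit : {z | ∃ s ∈ AS.S, z = AS.adj s y} = {y} := by
    ext z
    constructor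
    · rintro ⟨s, hs, rfl⟩
      exact hy s hs
    · rintro rfl
      exact ⟨1, AS.one_mem, (hy 1 AS.one_mem).symm⟩
  let := ndp.sigma'
  have := ndp.t2Space_sigma'
  simpa only [horbit, convexHull_singleton, closure_singleton, mem_singleton_iff] using AS.as2' α y

variable [Nonempty ι] [IsDirected ι (· ≤ ·)]

theorem exists_mem_fix'_p_ne_zero
    (hY : ∀ y : Y, ClustersIn ndp.sigma' (map (fun α : ι => AS.A' α y) atTop))
    {x : X} (hx : x ∈ fixedSpace AS.S) (hx0 : x ≠ 0) : ∃ y ∈ AS.fix', ndp.p x y ≠ 0 := by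
  obtain ⟨y, hy, hxy⟩ := ndp.exists_forall_map_eq_self_p_ne_zero
    (T := fun s : AS.S => AS.adj s) (T' := fun s : AS.S => s)
    (fun s => AS.adj_spec s s.2) AS.A'_spec hY (fun s => AS.as3'_right s s.2)
    (AS.A_apply_of_mem_fixedSpace hx) hx0
  exact ⟨y, fun s hs => hy ⟨s, hs⟩, hxy⟩

theorem exists_mem_fixedSpace_p_ne_zero
    (hX : ∀ x : X, ClustersIn ndp.sigma (map (fun α : ι => AS.A α x) atTop))
    {y : Y} (hy : y ∈ AS.fix') (hy0 : y ≠ 0) : ∃ x ∈ fixedSpace AS.S, ndp.p x y ≠ 0 := by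
  obtain ⟨x, hx, hxy⟩ := ndp.flip.exists_forall_map_eq_self_p_ne_zero
    (T := fun s : AS.S => s) (T' := fun s : AS.S => AS.adj s)
    (fun s y x => (AS.adj_spec s s.2 x y).symm) (fun α y x => (AS.A'_spec α x y).symm) hX
    (fun s => AS.as3_right s s.2) (AS.A'_apply_of_mem_fix' hy) hy0
  exact ⟨x, fun s hs => hx ⟨s, hs⟩, hxy⟩

end AverageScheme

theorem stmt7 {ι : Type*} [Preorder ι] [Nonempty ι] [IsDirected ι (· ≤ ·)]
    (ndp : NormingDualPair X Y) (AS : AverageScheme ndp ι)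
    (hX : ∀ x : X, ClustersIn ndp.sigma (Filter.map (fun α : ι => AS.A α x) atTop))
    (hY : ∀ y : Y, ClustersIn ndp.sigma' (Filter.map (fun α : ι => AS.A' α y) atTop)) :
    (∀ x ∈ fixedSpace AS.S, x ≠ 0 → ∃ y ∈ AS.fix', ndp.p x y ≠ 0) ∧
    (∀ y ∈ AS.fix', y ≠ 0 → ∃ x ∈ fixedSpace AS.S, ndp.p x y ≠ 0) :=
  ⟨fun _ hx hx0 => AS.exists_mem_fix'_p_ne_zero hY hx hx0,
    fun _ hy hy0 => AS.exists_mem_fixedSpace_p_ne_zero hX hy hy0⟩
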